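/- For every n ≥ 1, among overpartitions of n containing at least one non-overlined part, the number with ℓ_{O≥N} even (resp. odd) equals the number with ℓ_{O≤N} even (resp. odd), where ℓ_{O≥N} counts overlined parts of size ≥ the smallest non-overlined part and ℓ_{O≤N} counts overlined parts of size ≤ the largest non-overlined part. -/

import Mathlib

open scoped Classical

/-- An overpartition of `n`: a finite set of overlined part sizes (the first
occurrence of a size may be overlined, so overlined parts are distinct)
together with a multiset of non-overlined parts, all parts positive,
with total sum `n`. -/
structure Overpartition (n : ℕ) where
  overParts : Finset ℕ
  plain : Multiset ℕ
  over_pos : ∀ x ∈ overParts, 0 < x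
  plain_pos : ∀ x ∈ plain, 0 < x
  sum_eq : (∑ x ∈ overParts, x) + plain.sum = n

/-
Let `t` be the largest part of an overpartition `π`. Un-overlining `t` if it is overlined,
and otherwise overlining one copy of `t`, is an involution preserving the underlying
partition. As long as a non-overlined part remains, the smallest one `m` does not change, so
ℓ_{O≥N} = #{overlined parts ≥ m} changes by exactly one. The involution therefore matches the
`π` with ℓ_{O≥N} even and at least one non-overlined part with those with ℓ_{O≥N} odd together
with the partitions of `n` into distinct parts (all parts overlined). So #even - #odd is the
number of partitions into distinct parts, and the same holds for ℓ_{O≤N}, which is ℓ_{O≥N}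
for the reversed order on ℕ.
-/

open Finset

lemma card_filter_even_add_card_filter_odd {ι : Type*} (s : Finset ι) (P : ι → Prop)
    [DecidablePred P] (f : ι → ℕ) :
    #{i ∈ s | P i ∧ Even (f i)} + #{i ∈ s | P i ∧ Odd (f i)} = #{i ∈ s | P i} := by
  rw [← card_filter_add_card_filter_not (s := s.filter P) (fun i => Even (f i)),
    filter_filter, filter_filter]
  simp only [Nat.not_even_iff_odd]

section Toggle

variable {α : Type*} [LinearOrder α]

-- For an overpartition with overlined parts `S` and non-overlined parts `M`,
-- `numAbove S M` is ℓ_{O≥N} and `numBelow S M` is ℓ_{O≤N}.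
noncomputable def numAbove (S : Finset α) (M : Multiset α) : ℕ := #{x ∈ S | ∃ y ∈ M, y ≤ x}

noncomputable def numBelow (S : Finset α) (M : Multiset α) : ℕ := #{x ∈ S | ∃ y ∈ M, x ≤ y}

lemma numAbove_cons {S : Finset α} {M : Multiset α} {t : α} (h : ∃ y ∈ M, y ≤ t) :
    numAbove S (t ::ₘ M) = numAbove S M := by
  unfold numAbove
  congr 1
  refine filter_congr fun x _ => ⟨?_, fun ⟨y, hy, hyx⟩ => ⟨y, Multiset.mem_cons_of_mem hy, hyx⟩⟩
  rintro ⟨y, hy, hyx⟩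
  rcases Multiset.mem_cons.1 hy with rfl | hy
  · obtain ⟨z, hz, hzy⟩ := h
    exact ⟨z, hz, hzy.trans hyx⟩
  · exact ⟨y, hy, hyx⟩

lemma numAbove_insert {S : Finset α} {M : Multiset α} {t : α} (ht : t ∉ S)
    (h : ∃ y ∈ M, y ≤ t) : numAbove (insert t S) M = numAbove S M + 1 := by
  rw [numAbove, filter_insert, if_pos h, card_insert_of_notMem (fun h' => ht (mem_filter.1 h').1)]
  rfl

lemma numAbove_singleton {S : Finset α} {t : α} (h : ∀ x ∈ S, x < t) : numAbove S {t} = 0 := by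
  simpa [numAbove, filter_eq_empty_iff] using h

def toggle (t : α) (p : Finset α × Multiset α) : Finset α × Multiset α :=
  if t ∈ p.1 then (p.1.erase t, t ::ₘ p.2) else (insert t p.1, p.2.erase t)

lemma toggle_total {t : α} {p : Finset α × Multiset α} (ht : t ∈ p.1.val + p.2) :
    (toggle t p).1.val + (toggle t p).2 = p.1.val + p.2 := by
  obtain ⟨S, M⟩ := p
  unfold toggle
  split_ifs with hS
  · rw [erase_val, Multiset.add_cons, ← Multiset.cons_add, Multiset.cons_erase hS]
  · rw [insert_val_of_notMem hS, Multiset.cons_add, ← Multiset.add_cons,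
      Multiset.cons_erase ((Multiset.mem_add.1 ht).resolve_left hS)]

lemma toggle_toggle {t : α} {p : Finset α × Multiset α} (ht : t ∈ p.1.val + p.2) :
    toggle t (toggle t p) = p := by
  obtain ⟨S, M⟩ := p
  by_cases hS : t ∈ S
  · simp [toggle, hS, insert_erase]
  · simp [toggle, hS, Multiset.cons_erase ((Multiset.mem_add.1 ht).resolve_left hS)]

lemma even_numAbove_iff_toggle {t : α} {p : Finset α × Multiset α} (ht : t ∈ p.1.val + p.2)
    (hmax : ∀ x ∈ p.1.val + p.2, x ≤ t) :
    (p.2 ≠ 0 ∧ Even (numAbove p.1 p.2)) ↔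
      ((toggle t p).2 ≠ 0 ∧ Odd (numAbove (toggle t p).1 (toggle t p).2)) ∨
        ((toggle t p).2 = 0 ∧ (toggle t p).1.Nonempty) := by
  obtain ⟨S, M⟩ := p
  have hS : ∀ x ∈ S, x ≤ t := fun x hx => hmax x (Multiset.mem_add.2 (Or.inl hx))
  have hM : ∀ y ∈ M, y ≤ t := fun y hy => hmax y (Multiset.mem_add.2 (Or.inr hy))
  by_cases htS : t ∈ S
  · have hlt : ∀ x ∈ S.erase t, x < t := fun x hx =>
      (hS x (mem_of_mem_erase hx)).lt_of_ne (ne_of_mem_erase hx)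
    simp only [toggle, htS, if_true, ne_eq, Multiset.cons_ne_zero, not_false_eq_true, true_and,
      false_and, or_false]
    by_cases hM0 : M = 0
    · simp [hM0, numAbove_singleton hlt]
    · obtain ⟨y, hy⟩ := Multiset.exists_mem_of_ne_zero hM0
      have hyt : ∃ y ∈ M, y ≤ t := ⟨y, hy, hM y hy⟩
      rw [numAbove_cons hyt, ← insert_erase htS, numAbove_insert (notMem_erase t S) hyt,
        erase_insert (notMem_erase t S), Nat.even_add_one, Nat.not_even_iff_odd]
      simp [hM0]
  · have htM : t ∈ M := (Multiset.mem_add.1 ht).resolve_left htS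
    have hlt : ∀ x ∈ S, x < t := fun x hx => (hS x hx).lt_of_ne (ne_of_mem_of_not_mem hx htS)
    simp only [toggle, htS, if_false]
    rw [← Multiset.cons_erase htM]
    by_cases h0 : M.erase t = 0
    · simp [h0, numAbove_singleton hlt]
    · obtain ⟨y, hy⟩ := Multiset.exists_mem_of_ne_zero h0
      have hyt : ∃ y ∈ M.erase t, y ≤ t := ⟨y, hy, hM y (Multiset.mem_of_mem_erase hy)⟩
      rw [Multiset.erase_cons_head, numAbove_cons hyt, numAbove_insert htS hyt,
        Nat.odd_add_one, Nat.not_odd_iff_even]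
      simp [h0]

noncomputable def toggleMax (p : Finset α × Multiset α) : Finset α × Multiset α :=
  if h : p.1.val + p.2 = 0 then p
  else toggle ((p.1.val + p.2).toFinset.max' (Multiset.toFinset_nonempty.2 h)) p

lemma toggleMax_total (p : Finset α × Multiset α) :
    (toggleMax p).1.val + (toggleMax p).2 = p.1.val + p.2 := by
  unfold toggleMax
  split_ifs with h
  · rfl
  · exact toggle_total (Multiset.mem_toFinset.1 (max'_mem _ _))

lemma toggleMax_involutive : Function.Involutive (toggleMax (α := α)) := by
  intro p
  by_cases h : p.1.val + p.2 = 0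
  · simp [toggleMax, h]
  · have ht := Multiset.mem_toFinset.1 (max'_mem _ (Multiset.toFinset_nonempty.2 h))
    conv_lhs => arg 1; rw [toggleMax, dif_neg h]
    rw [toggleMax, dif_neg (by rwa [toggle_total ht])]
    simp only [toggle_total ht]
    exact toggle_toggle ht

lemma even_numAbove_iff_toggleMax (p : Finset α × Multiset α) :
    (p.2 ≠ 0 ∧ Even (numAbove p.1 p.2)) ↔
      ((toggleMax p).2 ≠ 0 ∧ Odd (numAbove (toggleMax p).1 (toggleMax p).2)) ∨
        ((toggleMax p).2 = 0 ∧ (toggleMax p).1.Nonempty) := by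
  by_cases h : p.1.val + p.2 = 0
  · obtain ⟨S, M⟩ := p
    obtain ⟨hS, rfl⟩ := add_eq_zero.1 h
    obtain rfl := val_eq_zero.1 hS
    simp [toggleMax]
  · rw [toggleMax, dif_neg h]
    exact even_numAbove_iff_toggle (Multiset.mem_toFinset.1 (max'_mem _ _))
      fun x hx => le_max' _ x (Multiset.mem_toFinset.2 hx)

theorem card_even_numAbove_eq_card_odd_add (s : Finset (Finset α × Multiset α))
    (hs : ∀ p ∈ s, ∀ q : Finset α × Multiset α, q.1.val + q.2 = p.1.val + p.2 → q ∈ s) :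
    #{p ∈ s | p.2 ≠ 0 ∧ Even (numAbove p.1 p.2)} =
      #{p ∈ s | p.2 ≠ 0 ∧ Odd (numAbove p.1 p.2)} + #{p ∈ s | p.2 = 0 ∧ p.1.Nonempty} := by
  rw [← card_union_of_disjoint (disjoint_filter.2 fun _ _ h h' => h.1 h'.1), ← filter_or]
  refine card_equiv (toggleMax_involutive.toPerm _) fun p => ?_
  have hmem : p ∈ s ↔ toggleMax p ∈ s :=
    ⟨fun hp => hs p hp _ (toggleMax_total p),
     fun hp => hs _ hp p (toggleMax_total p).symm⟩
  simp only [mem_filter, Function.Involutive.coe_toPerm, hmem, even_numAbove_iff_toggleMax p]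

theorem card_numAbove_eq_card_numBelow (s : Finset (Finset α × Multiset α))
    (hs : ∀ p ∈ s, ∀ q : Finset α × Multiset α, q.1.val + q.2 = p.1.val + p.2 → q ∈ s) :
    #{p ∈ s | p.2 ≠ 0 ∧ Even (numAbove p.1 p.2)} = #{p ∈ s | p.2 ≠ 0 ∧ Even (numBelow p.1 p.2)} ∧
    #{p ∈ s | p.2 ≠ 0 ∧ Odd (numAbove p.1 p.2)} = #{p ∈ s | p.2 ≠ 0 ∧ Odd (numBelow p.1 p.2)} := by
  have hAbove := card_even_numAbove_eq_card_odd_add s hs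
  -- `numBelow` is `numAbove` for the reversed order
  have hBelow : #{p ∈ s | p.2 ≠ 0 ∧ Even (numBelow p.1 p.2)} =
      #{p ∈ s | p.2 ≠ 0 ∧ Odd (numBelow p.1 p.2)} + #{p ∈ s | p.2 = 0 ∧ p.1.Nonempty} :=
    card_even_numAbove_eq_card_odd_add (α := αᵒᵈ) s hs
  have hAbove' :=
    card_filter_even_add_card_filter_odd s (fun p => p.2 ≠ 0) fun p => numAbove p.1 p.2
  have hBelow' :=
    card_filter_even_add_card_filter_odd s (fun p => p.2 ≠ 0) fun p => numBelow p.1 p.2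
  omega

end Toggle


namespace Overpartition

variable {n : ℕ}

def toPair (π : Overpartition n) : Finset ℕ × Multiset ℕ := (π.overParts, π.plain)

lemma toPair_injective : Function.Injective (toPair (n := n)) := by
  rintro ⟨S, M, _, _, _⟩ ⟨S', M', _, _, _⟩ h
  obtain ⟨rfl, rfl⟩ := Prod.mk.inj h
  rfl

lemma pos_of_mem_parts (π : Overpartition n) {x : ℕ} (hx : x ∈ π.overParts.val + π.plain) :
    0 < x :=
  (Multiset.mem_add.1 hx).elim (π.over_pos x) (π.plain_pos x)

lemma sum_parts (π : Overpartition n) : (π.overParts.val + π.plain).sum = n := by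
  rw [Multiset.sum_add, Finset.sum_val]
  exact π.sum_eq

def toPartition (π : Overpartition n) : n.Partition :=
  ⟨π.overParts.val + π.plain, π.pos_of_mem_parts, π.sum_parts⟩

lemma overParts_subset_range (π : Overpartition n) : π.overParts ⊆ range (n + 1) := fun _ hx =>
  mem_range_succ_iff.2 <| Nat.Partition.le_of_mem_parts (p := π.toPartition)
    (Multiset.mem_add.2 (Or.inl hx))

instance : Finite (Overpartition n) :=
  Finite.of_injective (β := n.Partition × (range (n + 1)).powerset)
    (fun π => (π.toPartition, ⟨π.overParts, mem_powerset.2 π.overParts_subset_range⟩))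
    fun π π' h => by
      simp only [Prod.mk.injEq, Subtype.mk.injEq, toPartition, Nat.Partition.mk.injEq] at h
      obtain ⟨hparts, hover⟩ := h
      rw [hover] at hparts
      exact toPair_injective (Prod.ext hover (add_left_cancel hparts))

noncomputable instance : Fintype (Overpartition n) := Fintype.ofFinite _

noncomputable def pairs (n : ℕ) : Finset (Finset ℕ × Multiset ℕ) :=
  univ.map ⟨toPair (n := n), toPair_injective⟩

lemma mem_pairs {p : Finset ℕ × Multiset ℕ} :
    p ∈ pairs n ↔ (∀ x ∈ p.1.val + p.2, 0 < x) ∧ (p.1.val + p.2).sum = n := by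
  simp only [pairs, mem_map, mem_univ, true_and, Function.Embedding.coeFn_mk]
  refine ⟨?_, fun ⟨hpos, hsum⟩ => ?_⟩
  · rintro ⟨π, rfl⟩
    exact ⟨fun _ => π.pos_of_mem_parts, π.sum_parts⟩
  · refine ⟨⟨p.1, p.2, fun x hx => hpos x (Multiset.mem_add.2 (Or.inl hx)),
      fun x hx => hpos x (Multiset.mem_add.2 (Or.inr hx)), ?_⟩, rfl⟩
    rw [← hsum, Multiset.sum_add, Finset.sum_val]
    rfl

lemma pairs_saturated (p : Finset ℕ × Multiset ℕ) (hp : p ∈ pairs n) (q : Finset ℕ × Multiset ℕ)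
    (hq : q.1.val + q.2 = p.1.val + p.2) : q ∈ pairs n := by
  rw [mem_pairs, hq]
  exact mem_pairs.1 hp

lemma natCard_eq_card_filter_pairs (P : Finset ℕ × Multiset ℕ → Prop) [DecidablePred P] :
    Nat.card {π : Overpartition n // P π.toPair} = #{p ∈ pairs n | P p} := by
  rw [Nat.card_eq_fintype_card, Fintype.card_subtype, pairs, filter_map, card_map]
  rfl

end Overpartition

theorem stmt_18_general (n : ℕ) :
    Nat.card {π : Overpartition n // π.plain ≠ 0 ∧
        Even ((π.overParts.filter (fun x => ∃ y ∈ π.plain, y ≤ x)).card)} =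
      Nat.card {π : Overpartition n // π.plain ≠ 0 ∧
        Even ((π.overParts.filter (fun x => ∃ y ∈ π.plain, x ≤ y)).card)} ∧
    Nat.card {π : Overpartition n // π.plain ≠ 0 ∧
        Odd ((π.overParts.filter (fun x => ∃ y ∈ π.plain, y ≤ x)).card)} =
      Nat.card {π : Overpartition n // π.plain ≠ 0 ∧
        Odd ((π.overParts.filter (fun x => ∃ y ∈ π.plain, x ≤ y)).card)} := by
  obtain ⟨hEven, hOdd⟩ :=
    card_numAbove_eq_card_numBelow (Overpartition.pairs n) Overpartition.pairs_saturated
  have hcard := Overpartition.natCard_eq_card_filter_pairs (n := n)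
  exact ⟨(hcard _).trans (hEven.trans (hcard _).symm), (hcard _).trans (hOdd.trans (hcard _).symm)⟩

theorem stmt_18 (n : ℕ) (hn : 1 ≤ n) :
    Nat.card {π : Overpartition n // π.plain ≠ 0 ∧
        Even ((π.overParts.filter (fun x => ∃ y ∈ π.plain, y ≤ x)).card)} =
      Nat.card {π : Overpartition n // π.plain ≠ 0 ∧
        Even ((π.overParts.filter (fun x => ∃ y ∈ π.plain, x ≤ y)).card)} ∧
    Nat.card {π : Overpartition n // π.plain ≠ 0 ∧
        Odd ((π.overParts.filter (fun x => ∃ y ∈ π.plain, y ≤ x)).card)} =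
      Nat.card {π : Overpartition n // π.plain ≠ 0 ∧
        Odd ((π.overParts.filter (fun x => ∃ y ∈ π.plain, x ≤ y)).card)} :=
  stmt_18_general n
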